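/- Let G be a countable discrete sofic group with a fixed sofic approximation σ_i : G → Sym({1,…,d_i}), let X be a compact metrizable space with a continuous G-action by homeomorphisms, let ρ be a dynamically generating continuous pseudometric on X, let μ be a G-invariant Borel probability measure on X, and let Ψ : X → X^G be Ψ(x)(g) = g^{-1}·x. Then for every finite F ⊆ G, finite L ⊆ C(X) and δ > 0, there exist a weak* open neighborhood O of Ψ_*μ in Prob(X^G) and an I ∈ ℕ such that for all i ≥ I, every x ∈ X^{d_i} with (φ_x)_*(u_{d_i}) ∈ O satisfies x ∈ Map_μ(ρ,F,L,δ,σ_i). -/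

import Mathlib

open MeasureTheory Filter Topology
open scoped ENNReal NNReal BigOperators Classical

namespace SoficPaper

/-- The proportion of indices `j ∈ Fin n` satisfying `P`. -/
noncomputable def prop {n : ℕ} (P : Fin n → Prop) : ℝ :=
  ((Finset.univ.filter P).card : ℝ) / n

/-- A sofic approximation of a group `G`. -/
def IsSoficApprox {G : Type*} [Group G] (d : ℕ → ℕ)
    (σ : ∀ i, G → Equiv.Perm (Fin (d i))) : Prop :=
  (∀ g h : G, Tendsto (fun i => prop fun j => σ i g (σ i h j) = σ i (g * h) j)
      atTop (nhds 1)) ∧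
  ∀ g : G, g ≠ 1 → Tendsto (fun i => prop fun j => σ i g j = j) atTop (nhds 0)

/-- The metric `ρ₂` on `X^n` associated with a pseudometric `ρ` on `X`. -/
noncomputable def rho2 {X : Type*} (ρ : X → X → ℝ) {n : ℕ} (x y : Fin n → X) : ℝ :=
  Real.sqrt ((n : ℝ)⁻¹ * ∑ j, ρ (x j) (y j) ^ 2)

/-- A continuous pseudometric. -/
structure IsCtsPseudoMetric {X : Type*} [TopologicalSpace X] (ρ : X → X → ℝ) : Prop where
  refl : ∀ x, ρ x x = 0
  symm : ∀ x y, ρ x y = ρ y x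
  triangle : ∀ x y z, ρ x z ≤ ρ x y + ρ y z
  continuous : Continuous fun p : X × X => ρ p.1 p.2

/-- A dynamically generating pseudometric. -/
def IsDynGenerating {G X : Type*} (act : G → X → X) (ρ : X → X → ℝ) : Prop :=
  ∀ x y : X, x ≠ y → ∃ g : G, 0 < ρ (act g x) (act g y)

/-- An action of `G` on `X` by homeomorphisms. -/
structure IsActionByHomeos (G X : Type*) [Group G] [TopologicalSpace X]
    (act : G → X → X) : Prop where
  one : ∀ x, act 1 x = x
  mul : ∀ g h x, act (g * h) x = act g (act h x)
  continuous : ∀ g, Continuous (act g)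

/-- An action of `G` on a topological group `X` by continuous automorphisms. -/
structure IsActionByAutomorphisms (G X : Type*) [Group G] [TopologicalSpace X] [Group X]
    (act : G → X → X) : Prop where
  one : ∀ x, act 1 x = x
  mul : ∀ g h x, act (g * h) x = act g (act h x)
  continuous : ∀ g, Continuous (act g)
  map_mul : ∀ g x y, act g (x * y) = act g x * act g y

/-- A compatible bi-invariant metric on a compact topological group: a continuous
separating pseudometric which is invariant under both left and right translations. -/
structure IsCompatBiInvMetric {X : Type*} [TopologicalSpace X] [Group X]
    (ρ : X → X → ℝ) : Prop where
  refl : ∀ x, ρ x x = 0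
  symm : ∀ x y, ρ x y = ρ y x
  triangle : ∀ x y z, ρ x z ≤ ρ x y + ρ y z
  continuous : Continuous fun p : X × X => ρ p.1 p.2
  pos : ∀ x y, x ≠ y → 0 < ρ x y
  biinv : ∀ a b x y, ρ (a * x * b) (a * y * b) = ρ x y

/-- The space `Map(ρ, F, δ, σᵢ)` of topological microstates. -/
def MapSp {G X : Type*} (act : G → X → X) (ρ : X → X → ℝ) {n : ℕ} (F : Finset G) (δ : ℝ)
    (σ : G → Equiv.Perm (Fin n)) : Set (Fin n → X) :=
  {φ | ∀ g ∈ F, rho2 ρ (fun j => act g (φ j)) (fun j => φ (σ g j)) < δ}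

/-- The space `Map_μ(ρ, F, L, δ, σᵢ)` of measure-theoretic microstates; the integral of
`f` against the empirical distribution `φ_* u_n` is written as the average `n⁻¹ ∑ j, f (φ j)`. -/
def MapMeas {G X : Type*} [TopologicalSpace X] [MeasurableSpace X]
    (act : G → X → X) (ρ : X → X → ℝ) (μ : Measure X) {n : ℕ}
    (F : Finset G) (L : Finset C(X, ℝ)) (δ : ℝ) (σ : G → Equiv.Perm (Fin n)) :
    Set (Fin n → X) :=
  {φ | φ ∈ MapSp act ρ F δ σ ∧ ∀ f ∈ L, |(n : ℝ)⁻¹ * ∑ j, f (φ j) - ∫ x, f x ∂μ| < δ}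

/-- Local and empirical convergence `μᵢ →^{le} μ`. -/
def LEconv {G X : Type*} [Group G] [TopologicalSpace X] [MeasurableSpace X]
    (d : ℕ → ℕ) (σ : ∀ i, G → Equiv.Perm (Fin (d i)))
    (act : G → X → X) (ρ : X → X → ℝ) (μ : Measure X)
    (μi : ∀ i, Measure (Fin (d i) → X)) : Prop :=
  ∀ (F : Finset G) (L : Finset C(X, ℝ)) (δ : ℝ), 0 < δ →
    Tendsto (fun i => (μi i (MapMeas act ρ μ F L δ (σ i))).toReal) atTop (nhds 1) ∧
    ∀ f ∈ L, Tendsto (fun i =>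
      prop fun j : Fin (d i) => |(∫ φ, f (φ j) ∂(μi i)) - ∫ x, f x ∂μ| < δ)
      atTop (nhds 1)

/-- The diagonal action on `X × X`. -/
def diagAct {G X : Type*} (act : G → X → X) : G → X × X → X × X :=
  fun g p => (act g p.1, act g p.2)

/-- The pseudometric `ρ̃` on `X × X` induced by `ρ`. -/
noncomputable def prodRho {X : Type*} (ρ : X → X → ℝ) : X × X → X × X → ℝ :=
  fun p q => Real.sqrt ((ρ p.1 q.1 ^ 2 + ρ p.2 q.2 ^ 2) / 2)

/-- The identification of `X^n × Y^n` with `(X × Y)^n`. -/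
def zipFun {X Y : Type*} {n : ℕ} (φ : Fin n → X) (ψ : Fin n → Y) : Fin n → X × Y :=
  fun j => (φ j, ψ j)

/-- Local and doubly empirical convergence `μᵢ →^{lde} μ`:
`μᵢ ⊗ μᵢ →^{le} μ ⊗ μ` for the diagonal action. -/
def LDEconv {G X : Type*} [Group G] [TopologicalSpace X] [MeasurableSpace X]
    (d : ℕ → ℕ) (σ : ∀ i, G → Equiv.Perm (Fin (d i)))
    (act : G → X → X) (ρ : X → X → ℝ) (μ : Measure X)
    (μi : ∀ i, Measure (Fin (d i) → X)) : Prop :=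
  LEconv d σ (diagAct act) (prodRho ρ) (μ.prod μ)
    (fun i => Measure.map (fun p : (Fin (d i) → X) × (Fin (d i) → X) => zipFun p.1 p.2)
      ((μi i).prod (μi i)))

/-- `N_ε(S, ρ)`: the maximal cardinality of an `ε`-separated subset of `S`. -/
noncomputable def sepNum {Z : Type*} (ρ : Z → Z → ℝ) (S : Set Z) (ε : ℝ) : ℝ :=
  sSup {r : ℝ | ∃ A : Finset Z, ↑A ⊆ S ∧
    (∀ x ∈ A, ∀ y ∈ A, x ≠ y → ε < ρ x y) ∧ r = (A.card : ℝ)}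

/-- Topological sofic entropy of a factor `π : X → Y` in the presence of `X`. -/
noncomputable def htopPres {G X Y : Type*} [Group G]
    (d : ℕ → ℕ) (σ : ∀ i, G → Equiv.Perm (Fin (d i)))
    (act : G → X → X) (ρX : X → X → ℝ) (π : X → Y) (ρY : Y → Y → ℝ) : EReal :=
  ⨆ ε ∈ Set.Ioi (0 : ℝ), ⨅ (F : Finset G), ⨅ δ ∈ Set.Ioi (0 : ℝ),
    Filter.limsup (fun i =>
      (((d i : ℝ)⁻¹ *
        Real.log (sepNum (rho2 ρY) ((fun φ => π ∘ φ) '' MapSp act ρX F δ (σ i)) ε) : ℝ) :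
          EReal)) atTop

/-- Measure-theoretic sofic entropy of a factor `π : X → Y` in the presence of `(X, μ)`. -/
noncomputable def hmeasPres {G X Y : Type*} [Group G] [TopologicalSpace X] [MeasurableSpace X]
    (d : ℕ → ℕ) (σ : ∀ i, G → Equiv.Perm (Fin (d i)))
    (act : G → X → X) (ρX : X → X → ℝ) (μ : Measure X) (π : X → Y) (ρY : Y → Y → ℝ) :
    EReal :=
  ⨆ ε ∈ Set.Ioi (0 : ℝ), ⨅ (F : Finset G), ⨅ (L : Finset C(X, ℝ)), ⨅ δ ∈ Set.Ioi (0 : ℝ),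
    Filter.limsup (fun i =>
      (((d i : ℝ)⁻¹ *
        Real.log (sepNum (rho2 ρY) ((fun φ => π ∘ φ) '' MapMeas act ρX μ F L δ (σ i)) ε) : ℝ) :
          EReal)) atTop

/-- Topological sofic entropy. -/
noncomputable def htop {G X : Type*} [Group G]
    (d : ℕ → ℕ) (σ : ∀ i, G → Equiv.Perm (Fin (d i)))
    (act : G → X → X) (ρ : X → X → ℝ) : EReal :=
  htopPres d σ act ρ id ρ

/-- Measure-theoretic sofic entropy. -/
noncomputable def hmeas {G X : Type*} [Group G] [TopologicalSpace X] [MeasurableSpace X]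
    (d : ℕ → ℕ) (σ : ∀ i, G → Equiv.Perm (Fin (d i)))
    (act : G → X → X) (ρ : X → X → ℝ) (μ : Measure X) : EReal :=
  hmeasPres d σ act ρ μ id ρ

/-- `S_{ε,δ}(ν, ρ)`: the smallest cardinality of a finite set whose open `ε`-neighborhood
has `ν`-measure at least `1 - δ`. -/
noncomputable def covNum {Z : Type*} [MeasurableSpace Z] (ρ : Z → Z → ℝ) (ν : Measure Z)
    (ε δ : ℝ) : ℝ :=
  sInf {r : ℝ | ∃ A : Finset Z,
    ENNReal.ofReal (1 - δ) ≤ ν {z | ∃ a ∈ A, ρ a z < ε} ∧ r = (A.card : ℝ)}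

/-- The local and doubly empirical model-measure sofic entropy `h^{lde}`. -/
noncomputable def hlde {G X : Type*} [Group G] [TopologicalSpace X] [MeasurableSpace X]
    (d : ℕ → ℕ) (σ : ∀ i, G → Equiv.Perm (Fin (d i)))
    (act : G → X → X) (ρ : X → X → ℝ) (μ : Measure X) : EReal :=
  ⨆ ε ∈ Set.Ioi (0 : ℝ), ⨆ δ ∈ Set.Ioi (0 : ℝ),
  ⨆ (s : ℕ → ℕ), ⨆ (_ : StrictMono s),
  ⨆ (ν : ∀ n, Measure (Fin (d (s n)) → X)),
  ⨆ (_ : (∀ n, IsProbabilityMeasure (ν n)) ∧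
      LDEconv (fun n => d (s n)) (fun n => σ (s n)) act ρ μ ν),
    Filter.limsup (fun n =>
      (((d (s n) : ℝ)⁻¹ * Real.log (covNum (rho2 ρ) (ν n) ε δ) : ℝ) : EReal)) atTop

/-- Local weak* convergence `μᵢ →^{lw*} μ`. -/
def LWconv {X : Type*} [TopologicalSpace X] [MeasurableSpace X] (d : ℕ → ℕ)
    (μ : Measure X) (μi : ∀ i, Measure (Fin (d i) → X)) : Prop :=
  ∀ (f : C(X, ℝ)) (δ : ℝ), 0 < δ →
    Tendsto (fun i =>
      prop fun j : Fin (d i) => |(∫ φ, f (φ j) ∂(μi i)) - ∫ x, f x ∂μ| < δ)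
      atTop (nhds 1)

/-- Ergodicity of an action with respect to a measure. -/
def ErgodicAction {G X : Type*} [MeasurableSpace X] (act : G → X → X) (μ : Measure X) :
    Prop :=
  ∀ A : Set X, MeasurableSet A → (∀ g, act g '' A = A) → μ A = 0 ∨ μ A = 1

/-- Weak mixing: ergodicity of the diagonal action on the square. -/
def WeaklyMixingAction {G X : Type*} [MeasurableSpace X] (act : G → X → X)
    (μ : Measure X) : Prop :=
  ErgodicAction (diagAct act) (μ.prod μ)

/-- The homoclinic group of an action on a compact group. -/
def homoclinic {G X : Type*} [TopologicalSpace X] [One X] (act : G → X → X) : Set X :=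
  {x | Tendsto (fun g => act g x) cofinite (nhds 1)}

/-- The left-shift action of `G` on `A^G`. -/
def shift (G A : Type*) [Group G] : G → (G → A) → (G → A) :=
  fun g x h => x (g⁻¹ * h)

/-- The map `Ψ : X → X^G`, `Ψ(x)(g) = g⁻¹ x`. -/
def PsiMap {G X : Type*} [Group G] (act : G → X → X) : X → G → X :=
  fun x g => act g⁻¹ x

/-- The map `φ_x : {1,…,dᵢ} → X^G`, `φ_x(j)(g) = x(σᵢ(g)⁻¹ j)`. -/
def phiX {G X : Type*} {n : ℕ} (σi : G → Equiv.Perm (Fin n)) (x : Fin n → X) :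
    Fin n → G → X :=
  fun j g => x ((σi g)⁻¹ j)

/-- The uniform measure on `Fin n`. -/
noncomputable def unif (n : ℕ) : Measure (Fin n) := (n : ℝ≥0∞)⁻¹ • Measure.count

lemma unif_isProb {n : ℕ} (hn : 0 < n) : IsProbabilityMeasure (unif n) := by
  constructor
  have : (Measure.count : Measure (Fin n)) Set.univ = n := by
    simp [Measure.count_univ]
  simp only [unif, Measure.smul_apply, this, smul_eq_mul]
  exact ENNReal.inv_mul_cancel (by exact_mod_cast hn.ne') (by simp)

/-- Pushforward of a probability measure along a measurable map, as a probability measure. -/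
noncomputable def pmMap {α β : Type*} [MeasurableSpace α] [MeasurableSpace β]
    (μ : Measure α) (hμ : IsProbabilityMeasure μ) {f : α → β} (hf : Measurable f) :
    ProbabilityMeasure β :=
  ⟨μ.map f, by haveI := hμ; exact Measure.isProbabilityMeasure_map hf.aemeasurable⟩

lemma measurable_of_fin {β : Type*} [MeasurableSpace β] {n : ℕ} (f : Fin n → β) :
    Measurable f := measurable_from_top

lemma measurable_phiX_coord {G X : Type*} [MeasurableSpace X] {n : ℕ}
    (σi : G → Equiv.Perm (Fin n)) (j : Fin n) :
    Measurable (fun x : Fin n → X => (fun g => x ((σi g)⁻¹ j) : G → X)) :=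
  measurable_pi_lambda _ fun _ => measurable_pi_apply _

/-- The empirical distribution of `φ : Fin n → Z`, a probability measure on `Z` (`n > 0`). -/
noncomputable def empDist {Z : Type*} [MeasurableSpace Z] {n : ℕ} (hn : 0 < n)
    (φ : Fin n → Z) : ProbabilityMeasure Z :=
  pmMap (unif n) (unif_isProb hn) (measurable_of_fin φ)

/-- Convolution of measures on a group. -/
noncomputable def mconv {X : Type*} [MeasurableSpace X] [Mul X] (μ ν : Measure X) :
    Measure X :=
  Measure.map (fun p : X × X => p.1 * p.2) (μ.prod ν)

/-- Convolution of probability measures on a compact metrizable group. -/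
noncomputable def pconv {X : Type*} [TopologicalSpace X] [MeasurableSpace X] [BorelSpace X]
    [SecondCountableTopology X] [Group X] [IsTopologicalGroup X]
    (μ ν : ProbabilityMeasure X) : ProbabilityMeasure X :=
  ⟨mconv (μ : Measure X) (ν : Measure X), by
    have hmul : Measurable fun p : X × X => p.1 * p.2 := continuous_mul.measurable
    exact Measure.isProbabilityMeasure_map hmul.aemeasurable⟩


/-- The diagonal product action of `G` on `X × Y`. -/
def prodAct {G X Y : Type*} (actX : G → X → X) (actY : G → Y → Y) : G → X × Y → X × Y :=
  fun g p => (actX g p.1, actY g p.2)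

end SoficPaper

open SoficPaper

/-!
The weak* neighbourhood of `Ψ_*μ` is cut out by finitely many test functions on `X^G`:
`ω ↦ f (ω 1)` for `f ∈ L`, and `ω ↦ ρ (g • ω g, ω 1)²` for `g ∈ F`, which vanishes on the image
of `Ψ`. Against the empirical distribution of `φ_x` these integrate to the empirical average of
`f ∘ x`, and to the average of `ρ (g • x j, x (σᵢ g j))²` up to the indices moved by `σᵢ 1`,
which are rare by soficity and each cost at most `max ρ²`.
-/

namespace SoficPaper

lemma prop_not_eq_one_sub {n : ℕ} (hn : 0 < n) (P : Fin n → Prop) :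
    prop (fun j => ¬ P j) = 1 - prop P := by
  unfold prop
  rw [eq_sub_iff_add_eq, add_comm, ← add_div, ← Nat.cast_add,
    Finset.card_filter_add_card_filter_not, Finset.card_univ, Fintype.card_fin, div_self (by exact_mod_cast hn.ne')]

lemma inv_mul_sum_le_add_prop_not_mul {n : ℕ} (P : Fin n → Prop) {u v : Fin n → ℝ} {C : ℝ}
    (huv : ∀ j, P j → u j ≤ v j) (hu : ∀ j, ¬ P j → u j ≤ C) (hv : ∀ j, 0 ≤ v j) :
    (n : ℝ)⁻¹ * ∑ j, u j ≤ (n : ℝ)⁻¹ * ∑ j, v j + prop (fun j => ¬ P j) * C := by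
  have hsum : ∑ j, u j ≤ ∑ j, v j + (Finset.univ.filter fun j => ¬ P j).card * C := by
    calc ∑ j, u j ≤ ∑ j, (v j + if P j then 0 else C) := by
          refine Finset.sum_le_sum fun j _ => ?_
          by_cases h : P j
          · simpa [h] using huv j h
          · simpa [h] using (hu j h).trans (le_add_of_nonneg_left (hv j))
      _ = _ := by
          rw [Finset.sum_add_distrib, Finset.sum_ite, Finset.sum_const_zero, Finset.sum_const,
            zero_add, nsmul_eq_mul]
  calc (n : ℝ)⁻¹ * ∑ j, u j
      ≤ (n : ℝ)⁻¹ * (∑ j, v j + (Finset.univ.filter fun j => ¬ P j).card * C) := by gcongr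
    _ = _ := by
        unfold prop
        rw [div_eq_inv_mul, mul_add, ← mul_assoc]
        -- the two filters differ only in their `Decidable` instances
        congr!

lemma IsSoficApprox.tendsto_prop_moved_one {G : Type*} [Group G] {d : ℕ → ℕ}
    (hd : ∀ i, 0 < d i) {σ : ∀ i, G → Equiv.Perm (Fin (d i))} (hσ : IsSoficApprox d σ) :
    Tendsto (fun i => prop fun j => ¬ σ i 1 j = j) atTop (𝓝 0) := by
  have hfix : ∀ i, (prop fun j => σ i 1 (σ i 1 j) = σ i (1 * 1) j) = prop fun j => σ i 1 j = j :=
    fun i => by simp only [one_mul, EmbeddingLike.apply_eq_iff_eq]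
  have h := (hσ.1 1 1).const_sub 1
  simp only [hfix, sub_self] at h
  simpa only [prop_not_eq_one_sub (hd _)] using h

lemma IsCtsPseudoMetric.exists_sq_le {X : Type*} [TopologicalSpace X] [CompactSpace X]
    {ρ : X → X → ℝ} (hρ : IsCtsPseudoMetric ρ) : ∃ M : ℝ, ∀ a b, ρ a b ^ 2 ≤ M := by
  obtain ⟨M, hM⟩ := (isCompact_range (hρ.continuous.pow 2)).bddAbove
  exact ⟨M, fun a b => hM ⟨(a, b), rfl⟩⟩

lemma IsActionByHomeos.act_act_inv {G X : Type*} [Group G] [TopologicalSpace X]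
    {act : G → X → X} (hact : IsActionByHomeos G X act) (g : G) (x : X) :
    act g (act g⁻¹ x) = x := by
  rw [← hact.mul, mul_inv_cancel, hact.one]

lemma integral_unif {n : ℕ} (f : Fin n → ℝ) :
    ∫ j, f j ∂(unif n) = (n : ℝ)⁻¹ * ∑ j, f j := by
  rw [unif, integral_smul_measure, integral_fintype Integrable.of_finite]
  simp [ENNReal.toReal_inv, Finset.mul_sum]

lemma integral_pmMap {α β : Type*} [MeasurableSpace α] [MeasurableSpace β] [TopologicalSpace β]
    [OpensMeasurableSpace β] {μ : Measure α} (hμ : IsProbabilityMeasure μ) {f : α → β}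
    (hf : Measurable f) {h : β → ℝ} (hh : Continuous h) :
    ∫ y, h y ∂(pmMap μ hμ hf : Measure β) = ∫ x, h (f x) ∂μ :=
  integral_map hf.aemeasurable hh.aestronglyMeasurable

lemma integral_empDist {Z : Type*} [MeasurableSpace Z] [TopologicalSpace Z]
    [OpensMeasurableSpace Z] {n : ℕ} (hn : 0 < n) (φ : Fin n → Z) {h : Z → ℝ}
    (hh : Continuous h) :
    ∫ z, h z ∂(empDist hn φ : Measure Z) = (n : ℝ)⁻¹ * ∑ j, h (φ j) := by
  rw [empDist, integral_pmMap _ _ hh, integral_unif]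

section Transfer

variable {G X : Type*} [Group G] [TopologicalSpace X] {act : G → X → X} {ρ : X → X → ℝ}

lemma continuous_sq_act_apply_one (hact : IsActionByHomeos G X act) (hρ : IsCtsPseudoMetric ρ)
    (g : G) : Continuous fun ω : G → X => ρ (act g (ω g)) (ω 1) ^ 2 :=
  (hρ.continuous.comp (((hact.continuous g).comp (continuous_apply g)).prodMk
    (continuous_apply 1))).pow 2

variable [MeasurableSpace X]

def transferNbhd (act : G → X → X) (ρ : X → X → ℝ) (μ : Measure X) (F : Finset G)
    (L : Finset C(X, ℝ)) (δ : ℝ) : Set (ProbabilityMeasure (G → X)) :=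
  {ν | (∀ f ∈ L, |∫ ω, f (ω 1) ∂(ν : Measure (G → X)) - ∫ x, f x ∂μ| < δ) ∧
    ∀ g ∈ F, ∫ ω, ρ (act g (ω g)) (ω 1) ^ 2 ∂(ν : Measure (G → X)) < δ ^ 2 / 2}

variable [OpensMeasurableSpace (G → X)]

lemma isOpen_transferNbhd [CompactSpace X] (hact : IsActionByHomeos G X act)
    (hρ : IsCtsPseudoMetric ρ) (μ : Measure X) (F : Finset G) (L : Finset C(X, ℝ)) (δ : ℝ) :
    IsOpen (transferNbhd act ρ μ F L δ) := by
  simp only [transferNbhd, Set.ofPred_and, Set.ofPred_forall]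
  refine (isOpen_biInter_finset fun f _ => ?_).inter (isOpen_biInter_finset fun g _ => ?_)
  · exact isOpen_lt (((ProbabilityMeasure.continuous_integral_continuousMap
      (⟨fun ω : G → X => f (ω 1), by fun_prop⟩ : C(G → X, ℝ))).sub continuous_const).abs)
      continuous_const
  · exact isOpen_lt (ProbabilityMeasure.continuous_integral_continuousMap
      (⟨_, continuous_sq_act_apply_one hact hρ g⟩ : C(G → X, ℝ))) continuous_const

lemma pmMap_psiMap_mem_transferNbhd (hact : IsActionByHomeos G X act)
    (hρ : IsCtsPseudoMetric ρ) {μ : Measure X} (hμ : IsProbabilityMeasure μ)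
    (hΨ : Measurable (PsiMap act)) (F : Finset G) (L : Finset C(X, ℝ)) {δ : ℝ} (hδ : 0 < δ) :
    pmMap μ hμ hΨ ∈ transferNbhd act ρ μ F L δ := by
  refine ⟨fun f _ => ?_, fun g _ => ?_⟩
  · rw [integral_pmMap hμ hΨ (by fun_prop)]
    simpa [PsiMap, hact.one] using hδ
  · rw [integral_pmMap hμ hΨ (continuous_sq_act_apply_one hact hρ g)]
    simp only [PsiMap, hact.act_act_inv, inv_one, hact.one, hρ.refl]
    simpa using pow_pos hδ 2

lemma integral_empDist_phiX_apply_one {n : ℕ} (hn : 0 < n) (σi : G → Equiv.Perm (Fin n))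
    (x : Fin n → X) (f : C(X, ℝ)) :
    ∫ ω, f (ω 1) ∂(empDist hn (phiX σi x) : Measure (G → X)) = (n : ℝ)⁻¹ * ∑ j, f (x j) := by
  rw [integral_empDist hn _ (by fun_prop)]
  simp only [phiX]
  rw [Equiv.sum_comp (σi 1)⁻¹ fun j => f (x j)]

/-- After reindexing by `σᵢ g`, the defect at `j` is the test function at `φ_x j`, except that
`φ_x j 1 = x ((σᵢ 1)⁻¹ j)` rather than `x j`. -/
lemma inv_mul_sum_sq_le_integral_add (hact : IsActionByHomeos G X act)
    (hρ : IsCtsPseudoMetric ρ) {M : ℝ} (hM : ∀ a b, ρ a b ^ 2 ≤ M) {n : ℕ} (hn : 0 < n)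
    (σi : G → Equiv.Perm (Fin n)) (x : Fin n → X) (g : G) :
    (n : ℝ)⁻¹ * ∑ j, ρ (act g (x j)) (x (σi g j)) ^ 2 ≤
      ∫ ω, ρ (act g (ω g)) (ω 1) ^ 2 ∂(empDist hn (phiX σi x) : Measure (G → X)) +
        prop (fun j => ¬ σi 1 j = j) * M := by
  rw [integral_empDist hn _ (continuous_sq_act_apply_one hact hρ g),
    ← Equiv.sum_comp (σi g)⁻¹]
  simp only [phiX, Equiv.Perm.coe_inv, Equiv.apply_symm_apply]
  refine inv_mul_sum_le_add_prop_not_mul _ (fun j hj => ?_) (fun j _ => hM _ _)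
    (fun j => sq_nonneg _)
  rw [(σi 1).symm_apply_eq.2 hj.symm]

lemma mem_mapMeas_of_empDist_mem_transferNbhd (hact : IsActionByHomeos G X act)
    (hρ : IsCtsPseudoMetric ρ) {M : ℝ} (hM : ∀ a b, ρ a b ^ 2 ≤ M) {μ : Measure X}
    {F : Finset G} {L : Finset C(X, ℝ)} {δ : ℝ} (hδ : 0 < δ) {n : ℕ} (hn : 0 < n)
    {σi : G → Equiv.Perm (Fin n)} (hσi : prop (fun j => ¬ σi 1 j = j) * M < δ ^ 2 / 2)
    {x : Fin n → X} (hx : empDist hn (phiX σi x) ∈ transferNbhd act ρ μ F L δ) :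
    x ∈ MapMeas act ρ μ F L δ σi := by
  refine ⟨fun g hg => (Real.sqrt_lt' hδ).2 ?_, fun f hf => ?_⟩
  · linarith [hx.2 g hg, inv_mul_sum_sq_le_integral_add hact hρ hM hn σi x g]
  · simpa only [integral_empDist_phiX_apply_one] using hx.1 f hf

end Transfer

end SoficPaper

theorem transfer_lemma_ii_general {G X : Type*} [Group G] [Countable G]
    [TopologicalSpace X] [CompactSpace X] [TopologicalSpace.MetrizableSpace X]
    [MeasurableSpace X] [BorelSpace X]
    (d : ℕ → ℕ) (hd : ∀ i, 0 < d i) (σ : ∀ i, G → Equiv.Perm (Fin (d i)))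
    (hσ : IsSoficApprox d σ)
    (act : G → X → X) (hact : IsActionByHomeos G X act)
    (ρ : X → X → ℝ) (hρ : IsCtsPseudoMetric ρ)
    (μ : MeasureTheory.Measure X) (hμProb : MeasureTheory.IsProbabilityMeasure μ)
    (hΨ : Measurable (PsiMap act)) :
    ∀ (F : Finset G) (L : Finset C(X, ℝ)) (δ : ℝ), 0 < δ →
      ∃ O : Set (MeasureTheory.ProbabilityMeasure (G → X)), IsOpen O ∧
        pmMap μ hμProb hΨ ∈ O ∧
        ∃ I : ℕ, ∀ i ≥ I, ∀ x : Fin (d i) → X,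
          empDist (hd i) (phiX (σ i) x) ∈ O → x ∈ MapMeas act ρ μ F L δ (σ i) := by
  intro F L δ hδ
  obtain ⟨M, hM⟩ := hρ.exists_sq_le
  have hmoved : Tendsto (fun i => prop (fun j => ¬ σ i 1 j = j) * M) atTop (𝓝 0) := by
    simpa using (hσ.tendsto_prop_moved_one hd).mul_const M
  have hδ2 : (0 : ℝ) < δ ^ 2 / 2 := by positivity
  obtain ⟨I, hI⟩ := eventually_atTop.1 (hmoved.eventually (gt_mem_nhds hδ2))
  exact ⟨transferNbhd act ρ μ F L δ, isOpen_transferNbhd hact hρ μ F L δ,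
    pmMap_psiMap_mem_transferNbhd hact hρ hμProb hΨ F L hδ, I, fun i hi x hx =>
      mem_mapMeas_of_empDist_mem_transferNbhd hact hρ hM hδ (hd i) (hI i hi) hx⟩

/-- Lemma 2.7(ii). Conversely, if `(φ_x)_*(u_{dᵢ})` lies in a suitable
weak* neighborhood of `Ψ_*μ`, then `x` is a measure-theoretic microstate. -/
theorem transfer_lemma_ii {G X : Type*} [Group G] [Countable G]
    [TopologicalSpace X] [CompactSpace X] [TopologicalSpace.MetrizableSpace X]
    [MeasurableSpace X] [BorelSpace X]
    (d : ℕ → ℕ) (hd : ∀ i, 0 < d i) (σ : ∀ i, G → Equiv.Perm (Fin (d i)))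
    (hσ : IsSoficApprox d σ)
    (act : G → X → X) (hact : IsActionByHomeos G X act)
    (ρ : X → X → ℝ) (hρ : IsCtsPseudoMetric ρ) (hρgen : IsDynGenerating act ρ)
    (μ : MeasureTheory.Measure X) (hμProb : MeasureTheory.IsProbabilityMeasure μ)
    (hμinv : ∀ g : G, MeasureTheory.Measure.map (act g) μ = μ)
    (hΨ : Measurable (PsiMap act)) :
    ∀ (F : Finset G) (L : Finset C(X, ℝ)) (δ : ℝ), 0 < δ →
      ∃ O : Set (MeasureTheory.ProbabilityMeasure (G → X)), IsOpen O ∧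
        pmMap μ hμProb hΨ ∈ O ∧
        ∃ I : ℕ, ∀ i ≥ I, ∀ x : Fin (d i) → X,
          empDist (hd i) (phiX (σ i) x) ∈ O → x ∈ MapMeas act ρ μ F L δ (σ i) :=
  transfer_lemma_ii_general d hd σ hσ act hact ρ hρ μ hμProb hΨ
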